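/- A frame F is Euclidean (∀x,y,z: xRy and xRz imply yRz) iff the sequent ♦p ⊢ ■♦p is valid on F, where ♦φ := ¬■¬φ. -/

import Mathlib

/-- Formulas of the language with ¬, ∧, ∨, □, ■, 𝐈 and ▲. -/
inductive Form : Type
  | var : ℕ → Form
  | neg : Form → Form
  | conj : Form → Form → Form
  | disj : Form → Form → Form
  | box : Form → Form
  | bbox : Form → Form
  | ign : Form → Form
  | tri : Form → Form

/-- A Kripke model for Belnap–Dunn modal logic. -/
structure Model (W : Type) where
  R : W → W → Prop
  vp : ℕ → W → Prop
  vn : ℕ → W → Prop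

mutual
  /-- support of truth -/
  def tr {W : Type} (M : Model W) : Form → W → Prop
    | .var n, w => M.vp n w
    | .neg φ, w => fa M φ w
    | .conj φ ψ, w => tr M φ w ∧ tr M ψ w
    | .disj φ ψ, w => tr M φ w ∨ tr M ψ w
    | .box φ, w => ∀ w', M.R w w' → tr M φ w'
    | .bbox φ, w => (∀ w', M.R w w' → tr M φ w') ∧
        ∀ w₁ w₂, M.R w w₁ → M.R w w₂ → fa M φ w₁ → fa M φ w₂
    | .ign φ, w => tr M φ w ∧ (∀ w', M.R w w' → w' ≠ w → fa M φ w') ∧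
        ∀ w₁ w₂, M.R w w₁ → w₁ ≠ w → M.R w w₂ → w₂ ≠ w → tr M φ w₁ → tr M φ w₂
    | .tri φ, w => (∀ w₁ w₂, M.R w w₁ → M.R w w₂ →
          (tr M φ w₁ → tr M φ w₂) ∧ (fa M φ w₁ → fa M φ w₂)) ∧
        ∀ w', M.R w w' → tr M φ w' ∨ fa M φ w'
  /-- support of falsity -/
  def fa {W : Type} (M : Model W) : Form → W → Prop
    | .var n, w => M.vn n w
    | .neg φ, w => tr M φ w
    | .conj φ ψ, w => fa M φ w ∨ fa M ψ w
    | .disj φ ψ, w => fa M φ w ∧ fa M ψ w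
    | .box φ, w => ∃ w', M.R w w' ∧ fa M φ w'
    | .bbox φ, w => (∃ w', M.R w w' ∧ fa M φ w') ∨
        ∃ w₁ w₂, M.R w w₁ ∧ M.R w w₂ ∧ tr M φ w₁ ∧ ¬ tr M φ w₂
    | .ign φ, w => fa M φ w ∨ (∃ w', M.R w w' ∧ w' ≠ w ∧ tr M φ w') ∨
        ∃ w₁ w₂, (M.R w w₁ ∧ w₁ ≠ w) ∧ (M.R w w₂ ∧ w₂ ≠ w) ∧ ¬ fa M φ w₁ ∧ fa M φ w₂
    | .tri φ, w => (∃ w₁ w₂, M.R w w₁ ∧ M.R w w₂ ∧ tr M φ w₁ ∧ ¬ tr M φ w₂) ∨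
        (∃ w₁ w₂, M.R w w₁ ∧ M.R w w₂ ∧ fa M φ w₁ ∧ ¬ fa M φ w₂) ∨
        (∃ w₁ w₂, M.R w w₁ ∧ M.R w w₂ ∧ tr M φ w₁ ∧ fa M φ w₂)
end

/-- φ contains an occurrence of □ -/
def hasBox : Form → Prop
  | .var _ => False
  | .neg φ => hasBox φ
  | .conj φ ψ => hasBox φ ∨ hasBox ψ
  | .disj φ ψ => hasBox φ ∨ hasBox ψ
  | .box _ => True
  | .bbox φ => hasBox φ
  | .ign φ => hasBox φ
  | .tri φ => hasBox φ

/-- φ contains an occurrence of ■ -/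
def hasBBox : Form → Prop
  | .var _ => False
  | .neg φ => hasBBox φ
  | .conj φ ψ => hasBBox φ ∨ hasBBox ψ
  | .disj φ ψ => hasBBox φ ∨ hasBBox ψ
  | .box φ => hasBBox φ
  | .bbox _ => True
  | .ign φ => hasBBox φ
  | .tri φ => hasBBox φ

/-- φ contains an occurrence of 𝐈 -/
def hasIgn : Form → Prop
  | .var _ => False
  | .neg φ => hasIgn φ
  | .conj φ ψ => hasIgn φ ∨ hasIgn ψ
  | .disj φ ψ => hasIgn φ ∨ hasIgn ψ
  | .box φ => hasIgn φ
  | .bbox φ => hasIgn φ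
  | .ign _ => True
  | .tri φ => hasIgn φ

/-- φ contains an occurrence of ▲ -/
def hasTri : Form → Prop
  | .var _ => False
  | .neg φ => hasTri φ
  | .conj φ ψ => hasTri φ ∨ hasTri ψ
  | .disj φ ψ => hasTri φ ∨ hasTri ψ
  | .box φ => hasTri φ
  | .bbox φ => hasTri φ
  | .ign φ => hasTri φ
  | .tri _ => True

/-- validity of the sequent φ ⊢ χ on the frame (W,R) -/
def validOn {W : Type} (R : W → W → Prop) (φ χ : Form) : Prop :=
  ∀ (vp vn : ℕ → W → Prop) (w : W), tr ⟨R, vp, vn⟩ φ w → tr ⟨R, vp, vn⟩ χ w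

/-- ♦φ := ¬■¬φ -/
def dia (φ : Form) : Form := .neg (.bbox (.neg φ))

/-! In a Euclidean frame every successor of `w` sees everything `w` sees, and any two successors
of `w` see each other's successors, so the existential truth condition of `♦φ` transfers from `w`
to its successors and its universal falsity condition transfers between successors. Conversely,
if `w₀ R w₁`, `w₀ R w₂` but not `w₁ R w₂`, make `p` exactly false on `R(w₁)` and exactly true
elsewhere: `♦p` holds at `w₀` thanks to `w₂`, but fails at `w₁`, so `■♦p` fails at `w₀`. -/

section Dia

variable {W : Type} (M : Model W) (φ : Form) {w v : W}

theorem tr_dia_iff : tr M (dia φ) w ↔ (∃ u, M.R w u ∧ tr M φ u) ∨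
    ∃ u₁ u₂, M.R w u₁ ∧ M.R w u₂ ∧ fa M φ u₁ ∧ ¬ fa M φ u₂ := by
  simp only [dia, tr, fa]

theorem fa_dia_iff : fa M (dia φ) w ↔ (∀ u, M.R w u → fa M φ u) ∧
    ∀ u₁ u₂, M.R w u₁ → M.R w u₂ → tr M φ u₁ → tr M φ u₂ := by
  simp only [dia, tr, fa]

variable {M φ}

theorem tr_dia_mono (hsub : ∀ u, M.R w u → M.R v u) (h : tr M (dia φ) w) : tr M (dia φ) v := by
  rw [tr_dia_iff] at h ⊢
  rcases h with ⟨u, hu, htr⟩ | ⟨u₁, u₂, hu₁, hu₂, hfa₁, hfa₂⟩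
  · exact Or.inl ⟨u, hsub u hu, htr⟩
  · exact Or.inr ⟨u₁, u₂, hsub u₁ hu₁, hsub u₂ hu₂, hfa₁, hfa₂⟩

theorem fa_dia_anti (hsub : ∀ u, M.R w u → M.R v u) (h : fa M (dia φ) v) : fa M (dia φ) w := by
  rw [fa_dia_iff] at h ⊢
  exact ⟨fun u hu => h.1 u (hsub u hu), fun u₁ u₂ hu₁ hu₂ => h.2 u₁ u₂ (hsub u₁ hu₁) (hsub u₂ hu₂)⟩

theorem not_tr_dia_of_forall_exactly_false (h : ∀ u, M.R w u → ¬ tr M φ u ∧ fa M φ u) :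
    ¬ tr M (dia φ) w := by
  rw [tr_dia_iff]
  rintro (⟨u, hu, htr⟩ | ⟨_, u₂, _, hu₂, _, hfa₂⟩)
  · exact (h u hu).1 htr
  · exact hfa₂ (h u₂ hu₂).2

theorem tr_bbox_dia_of_euclidean (heuc : ∀ x y z, M.R x y → M.R x z → M.R y z)
    (h : tr M (dia φ) w) : tr M (.bbox (dia φ)) w := by
  refine ⟨fun v hv => tr_dia_mono (fun u hu => heuc w v u hv hu) h, ?_⟩
  intro w₁ w₂ hw₁ hw₂
  have h₂₁ : M.R w₂ w₁ := heuc w w₂ w₁ hw₂ hw₁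
  exact fa_dia_anti fun u hu => heuc w₂ w₁ u h₂₁ hu

end Dia

/-- a frame is Euclidean iff ♦p ⊢ ■♦p is valid on it. -/
theorem euclidean_definability {W : Type} [Nonempty W] (R : W → W → Prop) :
    (∀ x y z, R x y → R x z → R y z) ↔
      validOn R (dia (.var 0)) (.bbox (dia (.var 0))) := by
  refine ⟨fun heuc _ _ _ => tr_bbox_dia_of_euclidean heuc, ?_⟩
  intro hvalid x y z hxy hxz
  by_contra hyz
  let M : Model W := ⟨R, fun _ u => ¬ R y u, fun _ u => R y u⟩
  have hx : tr M (dia (.var 0)) x := (tr_dia_iff M _).2 (Or.inl ⟨z, hxz, hyz⟩)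
  have hy : ¬ tr M (dia (.var 0)) y :=
    not_tr_dia_of_forall_exactly_false fun u hu => ⟨not_not_intro hu, hu⟩
  exact hy ((hvalid _ _ x hx).1 y hxy)
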